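/- Covariate testing-an-innovation setup with α ∈ (0,1), r ∈ [0,1], and q0 ∈ [0,1]. If δ is a treatment rule with δ_x(w̃) > 0 for some sample w̃ ∈ (𝒳 × [0,1])^N and some x ∈ 𝒳, then there exists a state (μ_{t,x}) with q_{α,r}(Σ_x π(x)·μ_{0,x}) = q0 such that R(δ) = q0 at that state. -/

import Mathlib

open MeasureTheory Set
open scoped ENNReal

noncomputable section

/-- The set of `α`-quantiles of a Borel probability measure on `[0,1]`
(represented as a measure on `ℝ` giving mass 1 to `[0,1]`). -/
def quantSet (α : ℝ) (μ : Measure ℝ) : Set ℝ :=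
  {q | q ∈ Icc (0 : ℝ) 1 ∧ α ≤ (μ (Icc 0 q)).toReal ∧ 1 - α ≤ (μ (Icc q 1)).toReal}

/-- The `(α, r)`-quantile of `μ`: `r · sup Q(α,μ) + (1 - r) · inf Q(α,μ)`. -/
def quant (α r : ℝ) (μ : Measure ℝ) : ℝ :=
  r * sSup (quantSet α μ) + (1 - r) * sInf (quantSet α μ)

/-- `μ` is a Borel probability measure concentrated on `[0,1]`. -/
def IsProb01 (μ : Measure ℝ) : Prop :=
  IsProbabilityMeasure μ ∧ μ (Icc (0 : ℝ) 1) = 1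

/-- The mixture `p · μ1 + (1 - p) · μ0`. -/
def mix (p : ℝ) (μ0 μ1 : Measure ℝ) : Measure ℝ :=
  ENNReal.ofReal p • μ1 + ENNReal.ofReal (1 - p) • μ0

/-- The "Bernoulli" measure on `[0,1]`: mass `a` at `0` and mass `1 - a` at `1`. -/
def Ber (a : ℝ) : Measure ℝ :=
  ENNReal.ofReal a • Measure.dirac (0 : ℝ) + ENNReal.ofReal (1 - a) • Measure.dirac (1 : ℝ)

variable {𝒳 : Type*}

/-- Law of one observation on an arm with covariate-conditional outcome laws `μ x`:
`Σ_x π(x) · (Dirac(x) ⊗ μ x)` on `𝒳 × [0,1]`. -/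
def lamCov [Fintype 𝒳] [MeasurableSpace 𝒳] (π : 𝒳 → ℝ) (μ : 𝒳 → Measure ℝ) :
    Measure (𝒳 × ℝ) :=
  ∑ x : 𝒳, ENNReal.ofReal (π x) • ((Measure.dirac x).prod (μ x))

/-- Outcome law when each covariate value `x` is treated with probability `c x`:
`ν(c) = Σ_x π(x) · (c_x · μ1 x + (1 − c_x) · μ0 x)`. -/
def nuCov [Fintype 𝒳] (π : 𝒳 → ℝ) (μ0 μ1 : 𝒳 → Measure ℝ) (c : 𝒳 → ℝ) :
    Measure ℝ :=
  ∑ x : 𝒳, ENNReal.ofReal (π x) • mix (c x) (μ0 x) (μ1 x)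

/-- The benchmark `sup_{c ∈ [0,1]^𝒳} q_{α,r}(ν(c))`. -/
def bestCov [Fintype 𝒳] (α r : ℝ) (π : 𝒳 → ℝ) (μ0 μ1 : 𝒳 → Measure ℝ) : ℝ :=
  sSup {v | ∃ c : 𝒳 → ℝ, (∀ x, c x ∈ Icc (0 : ℝ) 1) ∧ v = quant α r (nuCov π μ0 μ1 c)}

/-- Regret of a treatment rule in the covariate testing-an-innovation design (sample: `N`
i.i.d. draws from `λ_1`). -/
def regretCovTI [Fintype 𝒳] [MeasurableSpace 𝒳] (α r : ℝ) (π : 𝒳 → ℝ) (N : ℕ)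
    (δ : (Fin N → 𝒳 × ℝ) → 𝒳 → ℝ) (μ0 μ1 : 𝒳 → Measure ℝ) : ℝ :=
  bestCov α r π μ0 μ1 -
    quant α r
      (nuCov π μ0 μ1 fun x => ∫ w, δ w x ∂(Measure.pi fun _ : Fin N => lamCov π μ1))

section AuxLemmas

open ENNReal

theorem myPi_mono {ι : Type*} [Fintype ι] {α : ι → Type*} [∀ i, MeasurableSpace (α i)]
    {μ ν : ∀ i, Measure (α i)} (h : ∀ i, μ i ≤ ν i) : Measure.pi μ ≤ Measure.pi ν := by
  have hout : OuterMeasure.pi (fun i => (μ i).toOuterMeasure)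
      ≤ OuterMeasure.pi (fun i => (ν i).toOuterMeasure) := by
    rw [OuterMeasure.le_pi]
    intro t _
    refine (OuterMeasure.pi_pi_le _ t).trans ?_
    refine Finset.prod_le_prod' fun i _ => ?_
    simpa using (Measure.le_iff'.1 (h i)) (t i)
  refine Measure.le_iff.2 fun s hs => ?_
  rw [Measure.pi_def, Measure.pi_def, toMeasure_apply _ _ hs, toMeasure_apply _ _ hs]
  exact hout s

theorem myPi_smul_dirac {ι : Type*} [Fintype ι] {α : ι → Type*} [∀ i, MeasurableSpace (α i)]
    (κ : ι → ℝ≥0∞) (hκ : ∀ i, κ i ≠ ⊤) (z : ∀ i, α i) :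
    Measure.pi (fun i => κ i • Measure.dirac (z i)) = (∏ i, κ i) • Measure.dirac z := by
  have hsf : ∀ i, SigmaFinite ((fun i => κ i • Measure.dirac (z i)) i) := by
    intro i
    have : IsFiniteMeasure (κ i • Measure.dirac (z i)) := by
      constructor
      simp [Measure.smul_apply, lt_top_iff_ne_top, hκ i]
    infer_instance
  refine (Measure.pi_eq (μ := fun i => κ i • Measure.dirac (z i)) fun s hs => ?_)
  classical
  rw [Measure.smul_apply, Measure.dirac_apply' _ (MeasurableSet.univ_pi hs)]
  by_cases hz : ∀ i, z i ∈ s i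
  · rw [Set.indicator_of_mem (by simpa [Set.mem_univ_pi] using hz)]
    simp only [Pi.one_apply, smul_eq_mul, mul_one]
    refine Finset.prod_congr rfl fun i _ => ?_
    rw [Measure.smul_apply, Measure.dirac_apply' _ (hs i),
      Set.indicator_of_mem (hz i), Pi.one_apply, smul_eq_mul, mul_one]
  · push_neg at hz
    obtain ⟨i, hi⟩ := hz
    rw [Set.indicator_of_notMem (by simpa [Set.mem_univ_pi] using ⟨i, hi⟩), smul_eq_mul, mul_zero]
    refine (Finset.prod_eq_zero (Finset.mem_univ i) ?_).symm
    rw [Measure.smul_apply, Measure.dirac_apply' _ (hs i),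
      Set.indicator_of_notMem hi, smul_eq_mul, mul_zero]

theorem quant_of_singleton {α r b : ℝ} {μ : Measure ℝ} (h : quantSet α μ = {b}) :
    quant α r μ = b := by
  rw [quant, h, csSup_singleton, csInf_singleton]; ring

theorem quantSet_zero {α : ℝ} (hα : α ∈ Ioo (0:ℝ) 1) {μ : Measure ℝ}
    [IsProbabilityMeasure μ] (h1 : μ (Icc (0:ℝ) 1) = 1) (h0 : α < (μ {(0:ℝ)}).toReal) :
    quantSet α μ = {(0:ℝ)} := by
  ext q
  simp only [quantSet, mem_setOf_eq, mem_singleton_iff, mem_Icc]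
  constructor
  · rintro ⟨⟨hq0, hq1⟩, _, hB⟩
    by_contra hq
    have hqpos : 0 < q := lt_of_le_of_ne hq0 (Ne.symm hq)
    have hdisj : Disjoint {(0:ℝ)} (Icc q 1) := by
      rw [Set.disjoint_singleton_left, mem_Icc]
      intro ⟨h, _⟩; linarith
    have hsum : μ {(0:ℝ)} + μ (Icc q 1) ≤ 1 := by
      rw [← measure_union hdisj measurableSet_Icc]
      exact (measure_mono (subset_univ _)).trans_eq measure_univ
    have h1' : (μ {(0:ℝ)}).toReal + (μ (Icc q 1)).toReal ≤ 1 := by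
      rw [← ENNReal.toReal_add (measure_ne_top _ _) (measure_ne_top _ _)]
      simpa using ENNReal.toReal_mono ENNReal.one_ne_top hsum
    linarith
  · rintro rfl
    refine ⟨⟨le_refl _, zero_le_one⟩, ?_, ?_⟩
    · rw [Icc_self]; exact h0.le
    · rw [h1, ENNReal.toReal_one]; linarith [hα.1]

theorem twoAtom_apply {a b c d : ℝ} {s : Set ℝ} (hs : MeasurableSet s) :
    ((ENNReal.ofReal a • Measure.dirac c + ENNReal.ofReal b • Measure.dirac d) s)
      = ENNReal.ofReal a * s.indicator 1 c + ENNReal.ofReal b * s.indicator 1 d := by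
  rw [Measure.add_apply, Measure.smul_apply, Measure.smul_apply,
    Measure.dirac_apply' _ hs, Measure.dirac_apply' _ hs, smul_eq_mul, smul_eq_mul]

theorem quantSet_twoAtom {α a q0 : ℝ} (hα : α ∈ Ioo (0:ℝ) 1) (ha0 : 0 ≤ a) (ha : a < α)
    (hq0 : q0 ∈ Icc (0:ℝ) 1) :
    quantSet α (ENNReal.ofReal a • Measure.dirac 0 + ENNReal.ofReal (1-a) • Measure.dirac q0)
      = {q0} := by
  have ha1 : a ≤ 1 := by linarith [hα.2]
  refine Subset.antisymm ?_ ?_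
  · rintro q ⟨⟨hq0', hq1⟩, hA, hB⟩
    rcases lt_trichotomy q q0 with hlt | heq | hgt
    · exfalso
      rw [twoAtom_apply measurableSet_Icc] at hA
      rw [Set.indicator_of_mem (by rw [mem_Icc]; exact ⟨le_refl _, hq0'⟩),
        Set.indicator_of_notMem (by rw [mem_Icc]; intro ⟨_, h⟩; linarith)] at hA
      simp only [Pi.one_apply, mul_one, mul_zero, add_zero, ENNReal.toReal_ofReal ha0] at hA
      linarith
    · exact heq
    · exfalso
      rw [twoAtom_apply measurableSet_Icc] at hB
      rw [Set.indicator_of_notMem (by rw [mem_Icc]; intro ⟨h, _⟩; nlinarith [hq0.1]),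
        Set.indicator_of_notMem (by rw [mem_Icc]; intro ⟨h, _⟩; linarith)] at hB
      simp only [mul_zero, add_zero, ENNReal.toReal_zero] at hB
      linarith [hα.2]
  · rw [singleton_subset_iff]
    refine ⟨hq0, ?_, ?_⟩
    · rw [twoAtom_apply measurableSet_Icc,
        Set.indicator_of_mem (by rw [mem_Icc]; exact ⟨le_refl _, hq0.1⟩),
        Set.indicator_of_mem (by rw [mem_Icc]; exact ⟨hq0.1, le_refl _⟩)]
      simp only [Pi.one_apply, mul_one]
      rw [← ENNReal.ofReal_add ha0 (by linarith), ENNReal.toReal_ofReal (by linarith)]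
      linarith [hα.2]
    · rw [twoAtom_apply measurableSet_Icc]
      by_cases h0 : (0:ℝ) ∈ Icc q0 1
      · rw [Set.indicator_of_mem h0,
          Set.indicator_of_mem (show q0 ∈ Icc q0 1 by rw [mem_Icc]; exact ⟨le_refl _, hq0.2⟩)]
        simp only [Pi.one_apply, mul_one]
        rw [← ENNReal.ofReal_add ha0 (by linarith), ENNReal.toReal_ofReal (by linarith)]
        linarith [hα.1]
      · rw [Set.indicator_of_notMem h0,
          Set.indicator_of_mem (show q0 ∈ Icc q0 1 by rw [mem_Icc]; exact ⟨le_refl _, hq0.2⟩)]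
        simp only [Pi.one_apply, mul_one, mul_zero, zero_add]
        rw [ENNReal.toReal_ofReal (by linarith : (0:ℝ) ≤ 1 - a)]
        linarith

theorem twoAtom_meas_one {a c d : ℝ} (ha0 : 0 ≤ a) (ha1 : a ≤ 1) {s : Set ℝ}
    (hs : MeasurableSet s) (h0 : c ∈ s) (hq : d ∈ s) :
    (ENNReal.ofReal a • Measure.dirac c + ENNReal.ofReal (1-a) • Measure.dirac d) s = 1 := by
  rw [twoAtom_apply hs, Set.indicator_of_mem h0, Set.indicator_of_mem hq]
  simp only [Pi.one_apply, mul_one]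
  rw [← ENNReal.ofReal_add ha0 (by linarith), add_sub_cancel, ENNReal.ofReal_one]

theorem twoAtom_atom0 {a q0 : ℝ} :
    ENNReal.ofReal a ≤
      (ENNReal.ofReal a • Measure.dirac (0:ℝ) + ENNReal.ofReal (1-a) • Measure.dirac q0)
        ({0} : Set ℝ) := by
  rw [twoAtom_apply (measurableSet_singleton 0), Set.indicator_of_mem (mem_singleton (0:ℝ)),
    Pi.one_apply, mul_one]
  exact le_self_add

theorem twoAtom_tail_zero {a q0 q : ℝ} (hq0 : 0 ≤ q0) (h : q0 < q) :
    (ENNReal.ofReal a • Measure.dirac (0:ℝ) + ENNReal.ofReal (1-a) • Measure.dirac q0)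
      (Icc q 1) = 0 := by
  rw [twoAtom_apply measurableSet_Icc,
    Set.indicator_of_notMem (by rw [mem_Icc]; intro ⟨h', _⟩; linarith),
    Set.indicator_of_notMem (by rw [mem_Icc]; intro ⟨h', _⟩; linarith)]
  simp

theorem quant_le_of_subset {α r q0 : ℝ} {μ : Measure ℝ} (hr : r ∈ Icc (0:ℝ) 1)
    (hq0 : 0 ≤ q0) (h : quantSet α μ ⊆ Icc 0 q0) : quant α r μ ≤ q0 := by
  rcases eq_empty_or_nonempty (quantSet α μ) with he | hne
  · rw [quant, he]
    simp [Real.sSup_empty, Real.sInf_empty]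
    nlinarith [hr.1, hr.2]
  · have hbddB : BddBelow (quantSet α μ) := (bddBelow_Icc).mono h
    have hS : sSup (quantSet α μ) ≤ q0 := csSup_le hne fun x hx => (h hx).2
    obtain ⟨x, hx⟩ := hne
    have hI : sInf (quantSet α μ) ≤ q0 := (csInf_le hbddB hx).trans (h hx).2
    rw [quant]
    nlinarith [hr.1, hr.2]

def mu1m {N : ℕ} (ε : ℝ) (v : Fin N → ℝ) : Measure ℝ :=
  (∑ i : Fin N, ENNReal.ofReal ε • Measure.dirac (v i))
    + ENNReal.ofReal (1 - N * ε) • Measure.dirac 0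

theorem mu1m_apply {N : ℕ} (ε : ℝ) (v : Fin N → ℝ) {s : Set ℝ} (hs : MeasurableSet s) :
    mu1m ε v s = (∑ i : Fin N, ENNReal.ofReal ε * s.indicator 1 (v i))
      + ENNReal.ofReal (1 - N * ε) * s.indicator 1 0 := by
  rw [mu1m, Measure.add_apply, Measure.smul_apply, Measure.finset_sum_apply,
    Measure.dirac_apply' _ hs, smul_eq_mul]
  congr 1
  refine Finset.sum_congr rfl fun i _ => ?_
  rw [Measure.smul_apply, Measure.dirac_apply' _ hs, smul_eq_mul]

theorem mu1m_meas_one {N : ℕ} (ε : ℝ) (hε : 0 ≤ ε) (hNε : (N:ℝ) * ε ≤ 1) (v : Fin N → ℝ)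
    {s : Set ℝ} (hs : MeasurableSet s) (hv : ∀ i, v i ∈ s) (h0 : (0:ℝ) ∈ s) :
    mu1m ε v s = 1 := by
  rw [mu1m_apply ε v hs]
  have : ∀ i : Fin N, ENNReal.ofReal ε * s.indicator 1 (v i) = ENNReal.ofReal ε := fun i => by
    rw [Set.indicator_of_mem (hv i), Pi.one_apply, mul_one]
  rw [Finset.sum_congr rfl fun i _ => this i, Set.indicator_of_mem h0, Pi.one_apply, mul_one,
    Finset.sum_const, Finset.card_univ, Fintype.card_fin, nsmul_eq_mul,
    ← ENNReal.ofReal_natCast N, ← ENNReal.ofReal_mul (by positivity),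
    ← ENNReal.ofReal_add (by positivity) (by linarith), add_sub_cancel, ENNReal.ofReal_one]

theorem mu1m_tail_le {N : ℕ} (ε : ℝ) (hε : 0 ≤ ε) (v : Fin N → ℝ) {q : ℝ} (hq : 0 < q) :
    mu1m ε v (Icc q 1) ≤ ENNReal.ofReal ((N:ℝ) * ε) := by
  rw [mu1m_apply ε v measurableSet_Icc, Set.indicator_of_notMem
    (by rw [mem_Icc]; intro ⟨h, _⟩; linarith), mul_zero, add_zero]
  calc ∑ i : Fin N, ENNReal.ofReal ε * (Icc q 1).indicator 1 (v i)
      ≤ ∑ _i : Fin N, ENNReal.ofReal ε := by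
        refine Finset.sum_le_sum fun i _ => ?_
        have hle : (Icc q 1).indicator (1 : ℝ → ℝ≥0∞) (v i) ≤ 1 := by
          classical
          rw [Set.indicator_apply]; split <;> simp
        calc ENNReal.ofReal ε * (Icc q 1).indicator 1 (v i)
            ≤ ENNReal.ofReal ε * 1 := mul_le_mul_right hle _
          _ = ENNReal.ofReal ε := mul_one _
    _ = ENNReal.ofReal ((N:ℝ) * ε) := by
        rw [Finset.sum_const, Finset.card_univ, Fintype.card_fin, nsmul_eq_mul,
          ← ENNReal.ofReal_natCast N, ← ENNReal.ofReal_mul (by positivity)]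

theorem mu1m_atom0 {N : ℕ} (ε : ℝ) (v : Fin N → ℝ) :
    ENNReal.ofReal (1 - N * ε) ≤ mu1m ε v {0} := by
  rw [mu1m_apply ε v (measurableSet_singleton 0), Set.indicator_of_mem (mem_singleton (0:ℝ)),
    Pi.one_apply, mul_one]
  exact le_add_self

theorem mu1m_ge_dirac {N : ℕ} (ε : ℝ) (v : Fin N → ℝ) (i : Fin N) :
    ENNReal.ofReal ε • Measure.dirac (v i) ≤ mu1m ε v := by
  refine Measure.le_iff.2 fun s hs => ?_
  rw [mu1m_apply _ _ hs, Measure.smul_apply, Measure.dirac_apply' _ hs, smul_eq_mul]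
  exact le_trans (Finset.single_le_sum
    (f := fun j => ENNReal.ofReal ε * s.indicator 1 (v j)) (fun j _ => zero_le)
    (Finset.mem_univ i)) le_self_add

theorem nuCov_apply {𝒳 : Type*} [Fintype 𝒳] (π : 𝒳 → ℝ) (μ0 μ1 : 𝒳 → Measure ℝ) (c : 𝒳 → ℝ)
    (s : Set ℝ) :
    nuCov π μ0 μ1 c s = ∑ x : 𝒳, ENNReal.ofReal (π x) *
      (ENNReal.ofReal (c x) * μ1 x s + ENNReal.ofReal (1 - c x) * μ0 x s) := by
  rw [nuCov, Measure.finset_sum_apply]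
  refine Finset.sum_congr rfl fun x _ => ?_
  rw [Measure.smul_apply, smul_eq_mul, mix, Measure.add_apply, Measure.smul_apply,
    Measure.smul_apply, smul_eq_mul, smul_eq_mul]

theorem ofReal_pi_sum {𝒳 : Type*} [Fintype 𝒳] {π : 𝒳 → ℝ} (hπ : ∀ x, 0 ≤ π x)
    (hπ1 : ∑ x : 𝒳, π x = 1) : ∑ x : 𝒳, ENNReal.ofReal (π x) = 1 := by
  rw [← ENNReal.ofReal_sum_of_nonneg fun x _ => hπ x, hπ1, ENNReal.ofReal_one]

theorem nuCov_meas_one {𝒳 : Type*} [Fintype 𝒳] {π : 𝒳 → ℝ} (hπ : ∀ x, 0 ≤ π x)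
    (hπ1 : ∑ x : 𝒳, π x = 1) {μ0 μ1 : 𝒳 → Measure ℝ} {c : 𝒳 → ℝ}
    (hc : ∀ x, c x ∈ Icc (0:ℝ) 1) {s : Set ℝ}
    (h0 : ∀ x, μ0 x s = 1) (h1 : ∀ x, μ1 x s = 1) :
    nuCov π μ0 μ1 c s = 1 := by
  rw [nuCov_apply]
  have : ∀ x : 𝒳, ENNReal.ofReal (π x) *
      (ENNReal.ofReal (c x) * μ1 x s + ENNReal.ofReal (1 - c x) * μ0 x s)
      = ENNReal.ofReal (π x) := fun x => by
    rw [h0 x, h1 x, mul_one, mul_one, ← ENNReal.ofReal_add (hc x).1 (by linarith [(hc x).2]),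
      add_sub_cancel, ENNReal.ofReal_one, mul_one]
  rw [Finset.sum_congr rfl fun x _ => this x, ofReal_pi_sum hπ hπ1]

theorem lamCov_univ_eq_one {𝒳 : Type*} [Fintype 𝒳] [MeasurableSpace 𝒳] {π : 𝒳 → ℝ}
    (hπ : ∀ x, 0 ≤ π x) (hπ1 : ∑ x : 𝒳, π x = 1) {μ : 𝒳 → Measure ℝ}
    (hμ : ∀ x, IsProbabilityMeasure (μ x)) :
    lamCov π μ univ = 1 := by
  rw [lamCov, Measure.finset_sum_apply]
  have : ∀ x : 𝒳, (ENNReal.ofReal (π x) • ((Measure.dirac x).prod (μ x))) univ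
      = ENNReal.ofReal (π x) := fun x => by
    have := hμ x
    rw [Measure.smul_apply, measure_univ, smul_eq_mul, mul_one]
  rw [Finset.sum_congr rfl fun x _ => this x, ofReal_pi_sum hπ hπ1]

theorem lamCov_ge {𝒳 : Type*} [Fintype 𝒳] [MeasurableSpace 𝒳] (π : 𝒳 → ℝ)
    (μ : 𝒳 → Measure ℝ) [∀ y, SFinite (μ y)] (x : 𝒳) (v : ℝ) (e : ℝ)
    (h : ENNReal.ofReal e • Measure.dirac v ≤ μ x) :
    (ENNReal.ofReal (π x) * ENNReal.ofReal e) • Measure.dirac (x, v) ≤ lamCov π μ := by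
  have hfin : IsFiniteMeasure (ENNReal.ofReal e • Measure.dirac v) := by
    constructor
    simp [Measure.smul_apply, lt_top_iff_ne_top]
  have h1 : (Measure.dirac x).prod (ENNReal.ofReal e • Measure.dirac v)
      = ENNReal.ofReal e • Measure.dirac ((x, v) : 𝒳 × ℝ) := by
    rw [Measure.dirac_prod, Measure.map_smul, Measure.map_dirac' measurable_prodMk_left]
  have h2 : (Measure.dirac x).prod (ENNReal.ofReal e • Measure.dirac v)
      ≤ (Measure.dirac x).prod (μ x) := by
    rw [Measure.dirac_prod, Measure.dirac_prod]
    exact Measure.map_mono h measurable_prodMk_left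
  refine Measure.le_iff.2 fun s hs => ?_
  rw [lamCov, Measure.finset_sum_apply]
  refine le_trans ?_ (Finset.single_le_sum
    (f := fun y => (ENNReal.ofReal (π y) • ((Measure.dirac y).prod (μ y))) s)
    (fun y _ => zero_le) (Finset.mem_univ x))
  simp only [Measure.smul_apply, smul_eq_mul]
  rw [mul_assoc]
  refine mul_le_mul_right ?_ _
  calc ENNReal.ofReal e * Measure.dirac ((x, v) : 𝒳 × ℝ) s
      = (ENNReal.ofReal e • Measure.dirac ((x, v) : 𝒳 × ℝ)) s := rfl
    _ = ((Measure.dirac x).prod (ENNReal.ofReal e • Measure.dirac v)) s := by rw [h1]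
    _ ≤ ((Measure.dirac x).prod (μ x)) s := Measure.le_iff'.1 h2 s

end AuxLemmas

def twoAtomM (a q0 : ℝ) : Measure ℝ :=
  ENNReal.ofReal a • Measure.dirac (0:ℝ) + ENNReal.ofReal (1-a) • Measure.dirac q0

theorem twoAtomM_def (a q0 : ℝ) : twoAtomM a q0
    = ENNReal.ofReal a • Measure.dirac (0:ℝ) + ENNReal.ofReal (1-a) • Measure.dirac q0 := rfl

theorem quantSet_twoAtomM {α a q0 : ℝ} (hα : α ∈ Ioo (0:ℝ) 1) (ha0 : 0 ≤ a) (ha : a < α)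
    (hq0 : q0 ∈ Icc (0:ℝ) 1) : quantSet α (twoAtomM a q0) = {q0} := by
  rw [twoAtomM_def]; exact quantSet_twoAtom hα ha0 ha hq0

theorem twoAtomM_meas_one {a q0 : ℝ} (ha0 : 0 ≤ a) (ha1 : a ≤ 1) {s : Set ℝ}
    (hs : MeasurableSet s) (h0 : (0:ℝ) ∈ s) (hq : q0 ∈ s) : twoAtomM a q0 s = 1 := by
  rw [twoAtomM_def]; exact twoAtom_meas_one ha0 ha1 hs h0 hq

theorem twoAtomM_atom0 {a q0 : ℝ} : ENNReal.ofReal a ≤ twoAtomM a q0 ({0} : Set ℝ) := by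
  rw [twoAtomM_def]; exact twoAtom_atom0

theorem twoAtomM_tail_zero {a q0 q : ℝ} (hq0 : 0 ≤ q0) (h : q0 < q) :
    twoAtomM a q0 (Icc q 1) = 0 := by
  rw [twoAtomM_def]; exact twoAtom_tail_zero hq0 h

theorem bench_le {𝒳 : Type*} [Fintype 𝒳] (α r : ℝ) (hα : α ∈ Ioo (0:ℝ) 1)
    (hr : r ∈ Icc (0:ℝ) 1) {π : 𝒳 → ℝ} (hπ' : ∀ x, 0 ≤ π x) (hπ1 : ∑ x : 𝒳, π x = 1)
    {q0 a : ℝ} (hq01 : q0 ∈ Icc (0:ℝ) 1) {N : ℕ} {ε : ℝ} (hε : 0 ≤ ε)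
    (hNε : (N:ℝ) * ε ≤ (1 - α) / 2) (v : Fin N → ℝ)
    (c : 𝒳 → ℝ) (hc : ∀ x, c x ∈ Icc (0:ℝ) 1) :
    quant α r (nuCov π (fun _ => twoAtomM a q0) (fun _ => mu1m ε v) c) ≤ q0 := by
  have h1α : 0 < 1 - α := by linarith [hα.2]
  have hNε0 : 0 ≤ (N:ℝ) * ε := by positivity
  refine quant_le_of_subset hr hq01.1 ?_
  rintro q ⟨⟨hq0', hq1'⟩, hA, hB⟩
  refine ⟨hq0', ?_⟩
  by_contra hgt
  push_neg at hgt
  have hqpos : 0 < q := lt_of_le_of_lt hq01.1 hgt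
  have htail : nuCov π (fun _ => twoAtomM a q0) (fun _ => mu1m ε v) c (Icc q 1)
      ≤ ENNReal.ofReal ((N:ℝ)*ε) := by
    rw [nuCov_apply]
    have hterm : ∀ x : 𝒳, ENNReal.ofReal (π x) *
        (ENNReal.ofReal (c x) * mu1m ε v (Icc q 1)
          + ENNReal.ofReal (1 - c x) * twoAtomM a q0 (Icc q 1))
        ≤ ENNReal.ofReal (π x) * ENNReal.ofReal ((N:ℝ)*ε) := fun x => by
      rw [twoAtomM_tail_zero hq01.1 hgt, mul_zero, add_zero]
      refine mul_le_mul_right ?_ _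
      calc ENNReal.ofReal (c x) * mu1m ε v (Icc q 1)
          ≤ 1 * ENNReal.ofReal ((N:ℝ)*ε) :=
            mul_le_mul' (ENNReal.ofReal_le_one.2 (hc x).2) (mu1m_tail_le ε hε v hqpos)
        _ = _ := one_mul _
    refine le_trans (Finset.sum_le_sum fun x _ => hterm x) ?_
    rw [← Finset.sum_mul, ofReal_pi_sum hπ' hπ1, one_mul]
  have htr := ENNReal.toReal_mono ENNReal.ofReal_ne_top htail
  rw [ENNReal.toReal_ofReal hNε0] at htr
  linarith

theorem nu_c0 {𝒳 : Type*} [Fintype 𝒳] {π : 𝒳 → ℝ} (hπ' : ∀ x, 0 ≤ π x)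
    (hπ1 : ∑ x : 𝒳, π x = 1) (a q0 : ℝ) {N : ℕ} (ε : ℝ) (v : Fin N → ℝ) :
    nuCov π (fun _ => twoAtomM a q0) (fun _ => mu1m ε v) (fun _ => (0:ℝ))
      = twoAtomM a q0 := by
  rw [nuCov]
  have hmx : ∀ x : 𝒳, ENNReal.ofReal (π x) • mix (0:ℝ) (twoAtomM a q0) (mu1m ε v)
      = ENNReal.ofReal (π x) • twoAtomM a q0 := fun x => by
    rw [mix]; norm_num
  rw [Finset.sum_congr rfl fun x _ => hmx x, ← Finset.sum_smul,
    ofReal_pi_sum hπ' hπ1, one_smul]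

theorem mass_lower {𝒳 : Type*} [Fintype 𝒳] {π : 𝒳 → ℝ} (hπ' : ∀ x, 0 ≤ π x)
    (p : 𝒳 → ℝ) (hp0 : ∀ x, 0 ≤ p x) (hp1 : ∀ x, p x ≤ 1)
    {a : ℝ} (ha0 : 0 ≤ a) (q0 : ℝ) {N : ℕ} {ε : ℝ} (hNε1 : (N:ℝ) * ε ≤ 1)
    (v : Fin N → ℝ) {b : ℝ}
    (hb : b ≤ ∑ x : 𝒳, π x * (p x * (1 - (N:ℝ) * ε) + (1 - p x) * a)) :
    ENNReal.ofReal b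
      ≤ nuCov π (fun _ => twoAtomM a q0) (fun _ => mu1m ε v) p ({0} : Set ℝ) := by
  have hM0 : (0:ℝ) ≤ 1 - (N:ℝ) * ε := by linarith
  rw [nuCov_apply]
  have hterm : ∀ x : 𝒳, ENNReal.ofReal (π x * (p x * (1 - (N:ℝ) * ε) + (1 - p x) * a))
      ≤ ENNReal.ofReal (π x) * (ENNReal.ofReal (p x) * mu1m ε v ({0} : Set ℝ)
        + ENNReal.ofReal (1 - p x) * twoAtomM a q0 ({0} : Set ℝ)) := fun x => by
    calc ENNReal.ofReal (π x * (p x * (1 - (N:ℝ) * ε) + (1 - p x) * a))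
        = ENNReal.ofReal (π x) * (ENNReal.ofReal (p x) * ENNReal.ofReal (1 - (N:ℝ) * ε)
          + ENNReal.ofReal (1 - p x) * ENNReal.ofReal a) := by
          rw [ENNReal.ofReal_mul (hπ' x),
            ENNReal.ofReal_add (mul_nonneg (hp0 x) hM0)
              (mul_nonneg (by linarith [hp1 x]) ha0),
            ENNReal.ofReal_mul (hp0 x), ENNReal.ofReal_mul (by linarith [hp1 x])]
      _ ≤ _ := mul_le_mul_right
          (add_le_add (mul_le_mul_right (mu1m_atom0 ε v) _)
            (mul_le_mul_right twoAtomM_atom0 _)) _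
  calc ENNReal.ofReal b
      ≤ ENNReal.ofReal (∑ x : 𝒳, π x * (p x * (1 - (N:ℝ) * ε) + (1 - p x) * a)) :=
        ENNReal.ofReal_le_ofReal hb
    _ = ∑ x : 𝒳, ENNReal.ofReal (π x * (p x * (1 - (N:ℝ) * ε) + (1 - p x) * a)) :=
        ENNReal.ofReal_sum_of_nonneg fun x _ =>
          mul_nonneg (hπ' x) (by nlinarith [hp0 x, hp1 x])
    _ ≤ _ := Finset.sum_le_sum fun x _ => hterm x

set_option maxHeartbeats 1000000 in
theorem stmt19 [Fintype 𝒳] [Nonempty 𝒳] [MeasurableSpace 𝒳]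
    (α r : ℝ) (hα : α ∈ Ioo (0 : ℝ) 1) (hr : r ∈ Icc (0 : ℝ) 1)
    (π : 𝒳 → ℝ) (hπ : ∀ x, π x ∈ Ioc (0 : ℝ) 1) (hπ1 : ∑ x : 𝒳, π x = 1)
    (N : ℕ) (q0 : ℝ) (hq01 : q0 ∈ Icc (0 : ℝ) 1)
    (δ : (Fin N → 𝒳 × ℝ) → 𝒳 → ℝ)
    (hδm : ∀ x, Measurable fun w => δ w x)
    (hδ : ∀ w x, δ w x ∈ Icc (0 : ℝ) 1)
    (hpos : ∃ wt : Fin N → 𝒳 × ℝ, (∀ i, (wt i).2 ∈ Icc (0 : ℝ) 1) ∧ ∃ x, 0 < δ wt x) :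
    ∃ μ0 μ1 : 𝒳 → Measure ℝ, (∀ x, IsProb01 (μ0 x)) ∧ (∀ x, IsProb01 (μ1 x)) ∧
      quant α r (∑ x : 𝒳, ENNReal.ofReal (π x) • μ0 x) = q0 ∧
      regretCovTI α r π N δ μ0 μ1 = q0 := by
  classical
  obtain ⟨wt, hwt, x0, hx0⟩ := hpos
  have hπ' : ∀ x, 0 ≤ π x := fun x => (hπ x).1.le
  have h1α : 0 < 1 - α := by linarith [hα.2]
  set v : Fin N → ℝ := fun i => (wt i).2 with hv_def
  have hv : ∀ i, v i ∈ Icc (0:ℝ) 1 := fun i => hwt i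
  set ε : ℝ := (1 - α) / (2 * ((N:ℝ) + 1)) with hε_def
  have hεpos : 0 < ε := div_pos h1α (by positivity)
  have hNn : (0:ℝ) ≤ (N:ℝ) := Nat.cast_nonneg N
  have hNε2 : (N:ℝ) * ε ≤ (1 - α) / 2 := by
    rw [hε_def, mul_div_assoc', div_le_div_iff₀ (by positivity) (by norm_num)]
    nlinarith
  have hNε0 : 0 ≤ (N:ℝ) * ε := by positivity
  have hNε1 : (N:ℝ) * ε ≤ 1 := by linarith [hα.1]
  have hMα : α < 1 - (N:ℝ) * ε := by linarith
  have hμ1prob : IsProbabilityMeasure (mu1m ε v) :=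
    ⟨mu1m_meas_one ε hεpos.le hNε1 v MeasurableSet.univ (fun _ => mem_univ _) (mem_univ _)⟩
  have hμ1Icc : mu1m ε v (Icc (0:ℝ) 1) = 1 :=
    mu1m_meas_one ε hεpos.le hNε1 v measurableSet_Icc hv (by norm_num)
  haveI := hμ1prob
  haveI hlamprob : IsProbabilityMeasure (lamCov π (fun _ : 𝒳 => mu1m ε v)) :=
    ⟨lamCov_univ_eq_one hπ' hπ1 (fun _ => hμ1prob)⟩
  set p : 𝒳 → ℝ :=
    fun x => ∫ w, δ w x ∂(Measure.pi fun _ : Fin N => lamCov π (fun _ : 𝒳 => mu1m ε v))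
    with hp_def
  have hInt : ∀ x, Integrable (fun w => δ w x)
      (Measure.pi fun _ : Fin N => lamCov π (fun _ : 𝒳 => mu1m ε v)) := fun x => by
    refine (integrable_const (1:ℝ)).mono' ((hδm x).aestronglyMeasurable) ?_
    exact .of_forall fun w => by
      rw [Real.norm_eq_abs, abs_le]
      exact ⟨by linarith [(hδ w x).1], (hδ w x).2⟩
  have hp0 : ∀ x, 0 ≤ p x := fun x => integral_nonneg fun w => (hδ w x).1
  have hp1 : ∀ x, p x ≤ 1 := fun x => by
    have h := integral_mono (hInt x) (integrable_const 1) (fun w => (hδ w x).2)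
    rwa [integral_const, probReal_univ, one_smul] at h
  set κ : ℝ≥0∞ := ∏ i : Fin N, (ENNReal.ofReal (π (wt i).1) * ENNReal.ofReal ε) with hκ_def
  have hpile : κ • Measure.dirac wt
      ≤ Measure.pi fun _ : Fin N => lamCov π (fun _ : 𝒳 => mu1m ε v) := by
    rw [hκ_def, ← myPi_smul_dirac _
      (fun i => ENNReal.mul_ne_top ENNReal.ofReal_ne_top ENNReal.ofReal_ne_top) wt]
    refine myPi_mono fun i => ?_
    have h := lamCov_ge π (fun _ : 𝒳 => mu1m ε v) (wt i).1 (wt i).2 ε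
      (mu1m_ge_dirac ε v i)
    simpa using h
  have hκreal : 0 < κ.toReal := by
    rw [hκ_def, ENNReal.toReal_prod]
    refine Finset.prod_pos fun i _ => ?_
    rw [ENNReal.toReal_mul, ENNReal.toReal_ofReal (hπ' _), ENNReal.toReal_ofReal hεpos.le]
    exact mul_pos (hπ _).1 hεpos
  have hplow : κ.toReal * δ wt x0 ≤ p x0 := by
    have h1 : ∫ w, δ w x0 ∂(κ • Measure.dirac wt) = κ.toReal * δ wt x0 := by
      rw [integral_smul_measure, integral_dirac' _ _ ((hδm x0).stronglyMeasurable), smul_eq_mul]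
    rw [hp_def, ← h1]
    exact integral_mono_measure hpile (.of_forall fun w => (hδ w x0).1) (hInt x0)
  have hppos : 0 < p x0 := lt_of_lt_of_le (mul_pos hκreal hx0) hplow
  set M : ℝ := 1 - (N:ℝ) * ε with hM_def
  set m : ℝ := min α (π x0 * p x0 * (M - α)) with hm_def
  have hmpos : 0 < m :=
    lt_min hα.1 (mul_pos (mul_pos (hπ x0).1 hppos) (by rw [hM_def]; linarith))
  have hmα : m ≤ α := min_le_left _ _
  set a : ℝ := α - m / 2 with ha_def
  have ha0 : 0 ≤ a := by rw [ha_def]; linarith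
  have haα : a < α := by rw [ha_def]; linarith
  have ha1 : a ≤ 1 := by linarith [hα.2]
  have hμ0prob01 : ∀ x : 𝒳, IsProb01 ((fun _ : 𝒳 => twoAtomM a q0) x) :=
    fun x => ⟨⟨twoAtomM_meas_one ha0 ha1 MeasurableSet.univ (mem_univ _) (mem_univ _)⟩,
      twoAtomM_meas_one ha0 ha1 measurableSet_Icc (by norm_num) hq01⟩
  have hq0quant : quant α r (twoAtomM a q0) = q0 :=
    quant_of_singleton (quantSet_twoAtomM hα ha0 haα hq01)
  have hbest : bestCov α r π (fun _ : 𝒳 => twoAtomM a q0) (fun _ : 𝒳 => mu1m ε v) = q0 := by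
    refine IsGreatest.csSup_eq ⟨⟨fun _ => (0:ℝ), fun x => (by norm_num), ?_⟩, ?_⟩
    · rw [nu_c0 hπ' hπ1 a q0 ε v, hq0quant]
    · rintro vv ⟨c, hc, rfl⟩
      exact bench_le α r hα hr hπ' hπ1 hq01 hεpos.le hNε2 v c hc
  haveI hνprob : IsProbabilityMeasure
      (nuCov π (fun _ : 𝒳 => twoAtomM a q0) (fun _ : 𝒳 => mu1m ε v) p) :=
    ⟨nuCov_meas_one hπ' hπ1 (fun x => ⟨hp0 x, hp1 x⟩)
      (fun x => (hμ0prob01 x).1.measure_univ) (fun x => hμ1prob.measure_univ)⟩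
  have hνIcc : nuCov π (fun _ : 𝒳 => twoAtomM a q0) (fun _ : 𝒳 => mu1m ε v) p
      (Icc (0:ℝ) 1) = 1 :=
    nuCov_meas_one hπ' hπ1 (fun x => ⟨hp0 x, hp1 x⟩)
      (fun x => (hμ0prob01 x).2) (fun x => hμ1Icc)
  have hMa : a < M := by linarith
  have hreal : α + m / 2 ≤ ∑ x : 𝒳, π x * (p x * M + (1 - p x) * a) := by
    have hsplit : ∑ x : 𝒳, π x * (p x * M + (1 - p x) * a)
        = (∑ x : 𝒳, π x * a) + ∑ x : 𝒳, π x * (p x * (M - a)) := by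
      rw [← Finset.sum_add_distrib]
      exact Finset.sum_congr rfl fun x _ => by ring
    have h2 : ∑ x : 𝒳, π x * a = a := by rw [← Finset.sum_mul, hπ1, one_mul]
    have h3 : π x0 * (p x0 * (M - a)) ≤ ∑ x : 𝒳, π x * (p x * (M - a)) :=
      Finset.single_le_sum (fun x _ =>
        mul_nonneg (hπ' x) (mul_nonneg (hp0 x) (by linarith))) (Finset.mem_univ x0)
    have h5 : m ≤ π x0 * p x0 * (M - α) := min_le_right _ _
    have h6 : π x0 * p x0 * (M - α) ≤ π x0 * p x0 * (M - a) :=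
      mul_le_mul_of_nonneg_left (by linarith) (mul_nonneg (hπ' x0) (hp0 x0))
    have h7 : π x0 * p x0 * (M - a) = π x0 * (p x0 * (M - a)) := by ring
    rw [hsplit, h2, ha_def]
    linarith
  have hmass : α < ((nuCov π (fun _ : 𝒳 => twoAtomM a q0) (fun _ : 𝒳 => mu1m ε v) p)
      ({0} : Set ℝ)).toReal := by
    have hlow : ENNReal.ofReal (α + m/2)
        ≤ nuCov π (fun _ : 𝒳 => twoAtomM a q0) (fun _ : 𝒳 => mu1m ε v) p ({0} : Set ℝ) := by
      refine mass_lower hπ' p hp0 hp1 ha0 q0 hNε1 v ?_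
      rw [← hM_def]
      exact hreal
    have hne : nuCov π (fun _ : 𝒳 => twoAtomM a q0) (fun _ : 𝒳 => mu1m ε v) p
        ({0} : Set ℝ) ≠ ⊤ := measure_ne_top _ _
    have h := ENNReal.toReal_mono hne hlow
    rw [ENNReal.toReal_ofReal (by linarith [hα.1])] at h
    linarith
  have hach : quant α r
      (nuCov π (fun _ : 𝒳 => twoAtomM a q0) (fun _ : 𝒳 => mu1m ε v) p) = 0 :=
    quant_of_singleton (quantSet_zero hα hνIcc hmass)
  refine ⟨(fun _ : 𝒳 => twoAtomM a q0), (fun _ : 𝒳 => mu1m ε v), hμ0prob01,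
    fun x => ⟨hμ1prob, hμ1Icc⟩, ?_, ?_⟩
  · show quant α r (∑ x : 𝒳, ENNReal.ofReal (π x) • twoAtomM a q0) = q0
    rw [← Finset.sum_smul, ofReal_pi_sum hπ' hπ1, one_smul]
    exact hq0quant
  · show bestCov α r π (fun _ : 𝒳 => twoAtomM a q0) (fun _ : 𝒳 => mu1m ε v)
      - quant α r (nuCov π (fun _ : 𝒳 => twoAtomM a q0) (fun _ : 𝒳 => mu1m ε v) p) = q0
    rw [hbest, hach, sub_zero]
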